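/- Let prob satisfy the preflow condition on a finite rooted tree T, let D ≥ 1 be an integer, and let A ⊆ V(T). Let H be an antichain in T such that every h ∈ H has depth(h) ≥ D and, for every d ∈ {1,…,D}, an ancestor of depth d that belongs to A. Then D·∑_{h ∈ H} prob(h) ≤ ∑_{u ∈ A} prob(u). -/

import Mathlib

/-!
Push the mass of an antichain `S` lying below `v` up to `v`: group the elements of `S` by the
child of `v` through which they reach it. Each group is again an antichain below that child,
so by induction on the distance to `v` its mass is at most the child's, and the preflow
condition bounds the children's total by `prob v`. Hence for each level `d ≤ D` the mass of
`H` is at most that of the vertices of `A` at depth `d`, and summing over the `D` disjoint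
levels gives the bound.
-/

open Finset

def IsAncestor {V : Type*} (parent : V → V) (a x : V) : Prop :=
  ∃ k : ℕ, parent^[k] x = a

section Preflow

variable {V : Type*} {root : V} {parent : V → V}

theorem exists_child_of_iterate_eq (hroot : parent root = root) {s v : V} {k : ℕ}
    (hk : parent^[k] s = v) (hs : s ≠ v) :
    ∃ c, c ≠ root ∧ parent c = v ∧ ∃ j < k, parent^[j] s = c := by
  classical
  have hex : ∃ k, parent^[k] s = v := ⟨k, hk⟩
  obtain ⟨j, hj⟩ : ∃ j, Nat.find hex = j + 1 :=
    Nat.exists_eq_succ_of_ne_zero fun h => hs (by simpa [h] using Nat.find_spec hex)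
  have hparent : parent (parent^[j] s) = v := by
    simpa only [hj, Function.iterate_succ_apply'] using Nat.find_spec hex
  refine ⟨parent^[j] s, fun hc => ?_, hparent, j, ?_, rfl⟩
  · -- if the child were the root, `parent root = root` would give a shorter path to `v`
    have : parent^[j] s = v := by rw [← hparent, hc, hroot]
    exact Nat.find_min hex (by omega) this
  · have := Nat.find_min' hex hk
    omega

variable {prob : V → ℝ}

theorem sum_le_of_subset_singleton (hprob_nonneg : ∀ u, 0 ≤ prob u) {v : V} {S : Finset V}
    (hS : S ⊆ {v}) : ∑ s ∈ S, prob s ≤ prob v := by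
  simpa using sum_le_sum_of_subset_of_nonneg hS fun u _ _ => hprob_nonneg u

variable [Fintype V] [DecidableEq V]

theorem sum_le_of_isAntichain_of_iterate_le (hroot : parent root = root)
    (hprob_nonneg : ∀ u, 0 ≤ prob u)
    (hpreflow : ∀ v, ∑ u ∈ univ.filter (fun u => u ≠ root ∧ parent u = v), prob u ≤ prob v)
    (n : ℕ) {v : V} {S : Finset V} (hanti : IsAntichain (IsAncestor parent) (S : Set V))
    (hS : ∀ s ∈ S, ∃ k ≤ n, parent^[k] s = v) :
    ∑ s ∈ S, prob s ≤ prob v := by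
  induction n generalizing v S with
  | zero =>
    refine sum_le_of_subset_singleton hprob_nonneg fun s hs => ?_
    obtain ⟨k, hk, hsv⟩ := hS s hs
    obtain rfl : k = 0 := by omega
    simpa using hsv
  | succ n ih =>
    by_cases hv : v ∈ S
    · refine sum_le_of_subset_singleton hprob_nonneg fun s hs => mem_singleton.mpr ?_
      by_contra hsv
      obtain ⟨k, -, hk⟩ := hS s hs
      exact hanti hv hs (Ne.symm hsv) ⟨k, hk⟩
    have hchild : ∀ s ∈ S, ∃ c, c ≠ root ∧ parent c = v ∧ ∃ j ≤ n, parent^[j] s = c := by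
      intro s hs
      obtain ⟨k, hkn, hk⟩ := hS s hs
      obtain ⟨c, hc_root, hc_parent, j, hjk, hj⟩ :=
        exists_child_of_iterate_eq hroot hk (ne_of_mem_of_not_mem hs hv)
      exact ⟨c, hc_root, hc_parent, j, by omega, hj⟩
    choose! child hchild_root hchild_parent hchild_dist using hchild
    have hmaps : ∀ s ∈ S, child s ∈ univ.filter (fun u => u ≠ root ∧ parent u = v) :=
      fun s hs => mem_filter.mpr ⟨mem_univ _, hchild_root s hs, hchild_parent s hs⟩
    calc ∑ s ∈ S, prob s
        = ∑ c ∈ univ.filter (fun u => u ≠ root ∧ parent u = v),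
            ∑ s ∈ S with child s = c, prob s := (sum_fiberwise_of_maps_to hmaps prob).symm
      _ ≤ ∑ c ∈ univ.filter (fun u => u ≠ root ∧ parent u = v), prob c := by
        refine sum_le_sum fun c _ => ih (hanti.subset (coe_subset.mpr (filter_subset _ _))) fun s hs => ?_
        obtain ⟨hsS, rfl⟩ := mem_filter.mp hs
        exact hchild_dist s hsS
      _ ≤ prob v := hpreflow v

theorem sum_le_of_isAntichain (hroot : parent root = root) (hprob_nonneg : ∀ u, 0 ≤ prob u)
    (hpreflow : ∀ v, ∑ u ∈ univ.filter (fun u => u ≠ root ∧ parent u = v), prob u ≤ prob v)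
    {v : V} {S : Finset V} (hanti : IsAntichain (IsAncestor parent) (S : Set V))
    (hS : ∀ s ∈ S, IsAncestor parent v s) :
    ∑ s ∈ S, prob s ≤ prob v := by
  choose! k hk using hS
  exact sum_le_of_isAntichain_of_iterate_le hroot hprob_nonneg hpreflow (S.sup k) hanti
    fun s hs => ⟨k s, le_sup hs, hk s hs⟩

theorem sum_le_sum_of_forall_exists_isAncestor (hroot : parent root = root)
    (hprob_nonneg : ∀ u, 0 ≤ prob u)
    (hpreflow : ∀ v, ∑ u ∈ univ.filter (fun u => u ≠ root ∧ parent u = v), prob u ≤ prob v)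
    {S B : Finset V} (hanti : IsAntichain (IsAncestor parent) (S : Set V))
    (hB : ∀ s ∈ S, ∃ b ∈ B, IsAncestor parent b s) :
    ∑ s ∈ S, prob s ≤ ∑ b ∈ B, prob b := by
  choose! top htop_mem htop using hB
  calc ∑ s ∈ S, prob s
      = ∑ b ∈ B, ∑ s ∈ S with top s = b, prob s := (sum_fiberwise_of_maps_to htop_mem prob).symm
    _ ≤ ∑ b ∈ B, prob b := by
      refine sum_le_sum fun b _ =>
        sum_le_of_isAntichain hroot hprob_nonneg hpreflow (hanti.subset (coe_subset.mpr (filter_subset _ _))) fun s hs => ?_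
      obtain ⟨hsS, rfl⟩ := mem_filter.mp hs
      exact htop s hsS

end Preflow

theorem stmt_7_general {V : Type*} [Fintype V] [DecidableEq V]
    (root : V) (parent : V → V) (depth : V → ℕ)
    (hroot : parent root = root)
    (prob : V → ℝ) (hprob_nonneg : ∀ u, 0 ≤ prob u)
    (hpreflow : ∀ v, ∑ u ∈ univ.filter (fun u => u ≠ root ∧ parent u = v), prob u ≤ prob v)
    (D : ℕ)
    (A : Finset V) (H : Finset V)
    (hanti : ∀ x ∈ H, ∀ y ∈ H, x ≠ y → ¬ (∃ k : ℕ, parent^[k] y = x))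
    (hHanc : ∀ h ∈ H, ∀ d ∈ Icc 1 D, ∃ a ∈ A, (∃ k : ℕ, parent^[k] h = a) ∧ depth a = d) :
    (D : ℝ) * ∑ h ∈ H, prob h ≤ ∑ u ∈ A, prob u := by
  have hlevel : ∀ d ∈ Icc 1 D, ∑ h ∈ H, prob h ≤ ∑ a ∈ A with depth a = d, prob a := by
    intro d hd
    refine sum_le_sum_of_forall_exists_isAncestor hroot hprob_nonneg hpreflow
      (fun x hx y hy => hanti x hx y hy) fun h hh => ?_
    obtain ⟨a, ha, hanc, rfl⟩ := hHanc h hh d hd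
    exact ⟨a, mem_filter.mpr ⟨ha, rfl⟩, hanc⟩
  calc (D : ℝ) * ∑ h ∈ H, prob h = ∑ d ∈ Icc 1 D, ∑ h ∈ H, prob h := by simp
    _ ≤ ∑ d ∈ Icc 1 D, ∑ a ∈ A with depth a = d, prob a := sum_le_sum hlevel
    _ ≤ ∑ a ∈ A, prob a :=
      sum_fiberwise_le_sum_of_sum_fiber_nonneg fun _ _ => sum_nonneg fun a _ => hprob_nonneg a

/-- If `prob` satisfies the preflow condition on a finite
rooted tree, `H` is an antichain all of whose elements have depth at least `D`
and possess, for every `d ∈ {1,…,D}`, an ancestor of depth `d` lying in `A`,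
then `D · ∑_{h ∈ H} prob h ≤ ∑_{u ∈ A} prob u`. -/
theorem stmt_7 {V : Type*} [Fintype V] [DecidableEq V]
    (root : V) (parent : V → V) (depth : V → ℕ)
    (hroot : parent root = root)
    (hdepth_root : depth root = 0)
    (hdepth : ∀ u, u ≠ root → depth u = depth (parent u) + 1)
    (prob : V → ℝ) (hprob_nonneg : ∀ u, 0 ≤ prob u)
    (hpreflow : ∀ v, ∑ u ∈ univ.filter (fun u => u ≠ root ∧ parent u = v), prob u ≤ prob v)
    (D : ℕ) (hD : 1 ≤ D)
    (A : Finset V) (H : Finset V)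
    (hanti : ∀ x ∈ H, ∀ y ∈ H, x ≠ y → ¬ (∃ k : ℕ, parent^[k] y = x))
    (hHdepth : ∀ h ∈ H, D ≤ depth h)
    (hHanc : ∀ h ∈ H, ∀ d ∈ Icc 1 D, ∃ a ∈ A, (∃ k : ℕ, parent^[k] h = a) ∧ depth a = d) :
    (D : ℝ) * ∑ h ∈ H, prob h ≤ ∑ u ∈ A, prob u :=
  stmt_7_general root parent depth hroot prob hprob_nonneg hpreflow D A H hanti hHanc
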